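/- arXiv:2103.02475 — 2 statements merged into one kernel-verified Lean document; each statement's English description precedes it below -/
import Mathlib

section
/- Let N be a Petri net with basis partition (T_E, T_I) where the T_I-induced subnet is acyclic. Any firing sequence σ = σ_1 t_1 σ_2 t_2 ⋯ σ_n t_n σ_{n+1} from a basis marking M_b (with σ_j ∈ T_I*, t_j ∈ T_E) reaching marking M can be rearranged into a sequence σ_min,1 t_1 σ_min,2 t_2 ⋯ σ_min,n t_n σ' firable from M_b and reaching the same M, where each σ_min,j is a minimal explanation of t_j at the basis marking reached after σ_min,1 t_1 ⋯ σ_min,j−1 t_j−1, and σ' ∈ T_I*. Hence every reachable marking of N lies in the implicit reach of some basis marking reachable in the BRG. -/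
/-- A Petri net with `m` places and `n` transitions. -/
structure PetriNet (m n : ℕ) where
  Pre : Fin m → Fin n → ℕ
  Post : Fin m → Fin n → ℕ

namespace PetriNet

variable {m n : ℕ}

/-- Incidence matrix `C = Post - Pre`. -/
def C (N : PetriNet m n) (p : Fin m) (t : Fin n) : ℤ :=
  (N.Post p t : ℤ) - (N.Pre p t : ℤ)

/-- Transition `t` is enabled at marking `M`. -/
def enabled (N : PetriNet m n) (M : Fin m → ℕ) (t : Fin n) : Prop :=
  ∀ p, N.Pre p t ≤ M p

/-- Firing transition `t` at marking `M`. -/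
def fire (N : PetriNet m n) (M : Fin m → ℕ) (t : Fin n) : Fin m → ℕ :=
  fun p => M p + N.Post p t - N.Pre p t

/-- `fires N M σ M'` : the sequence `σ` is firable at `M` and yields `M'`. -/
inductive fires (N : PetriNet m n) : (Fin m → ℕ) → List (Fin n) → (Fin m → ℕ) → Prop
  | nil (M : Fin m → ℕ) : fires N M [] M
  | cons {M M' : Fin m → ℕ} {t : Fin n} {σ : List (Fin n)} :
      N.enabled M t → fires N (N.fire M t) σ M' → fires N M (t :: σ) M'

/-- Firing vector of a sequence. -/
def fvec (σ : List (Fin n)) : Fin n → ℕ := fun t => σ.count t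

/-- Arcs of the subnet induced by transition set `TI` (full net for `TI = Set.univ`). -/
def arc (N : PetriNet m n) (TI : Set (Fin n)) :
    (Fin m ⊕ Fin n) → (Fin m ⊕ Fin n) → Prop
  | Sum.inl p, Sum.inr t => t ∈ TI ∧ 0 < N.Pre p t
  | Sum.inr t, Sum.inl p => t ∈ TI ∧ 0 < N.Post p t
  | _, _ => False

/-- The subnet induced by `TI` is acyclic: no directed cycle. -/
def SubnetAcyclic (N : PetriNet m n) (TI : Set (Fin n)) : Prop :=
  ∀ x, ¬ Relation.TransGen (N.arc TI) x x

/-- Transitions in structural conflict. -/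
def Tconf (N : PetriNet m n) : Set (Fin n) :=
  {t | ∃ p, 0 < N.Pre p t ∧ ∃ t', t' ≠ t ∧ 0 < N.Pre p t'}

/-- `TI` is non-conflicting: `TI ⊆ T \ T_conf`. -/
def NonConflicting (N : PetriNet m n) (TI : Set (Fin n)) : Prop :=
  ∀ t ∈ TI, t ∉ N.Tconf

/-- `TI` is non-increasing w.r.t. the GMEC weight vector `w`. -/
def NonIncreasing (N : PetriNet m n) (w : Fin m → ℤ) (TI : Set (Fin n)) : Prop :=
  ∀ t ∈ TI, ∑ p, w p * N.C p t ≤ 0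

/-- The `TI`-induced subnet is conflict-free: every place has at most one
output transition among `TI`. -/
def ConflictFreeSubnet (N : PetriNet m n) (TI : Set (Fin n)) : Prop :=
  ∀ p : Fin m, ∀ t ∈ TI, ∀ t' ∈ TI, 0 < N.Pre p t → 0 < N.Pre p t' → t = t'

/-- `σ` consists only of transitions in `TI`. -/
def ImplicitSeq (TI : Set (Fin n)) (σ : List (Fin n)) : Prop := ∀ t ∈ σ, t ∈ TI

/-- Implicit reach of a marking `Mb`. -/
def RI (N : PetriNet m n) (TI : Set (Fin n)) (Mb : Fin m → ℕ) : Set (Fin m → ℕ) :=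
  {M | ∃ σ, ImplicitSeq TI σ ∧ N.fires Mb σ M}

/-- Reachability set. -/
def Reach (N : PetriNet m n) (M0 : Fin m → ℕ) : Set (Fin m → ℕ) :=
  {M | ∃ σ, N.fires M0 σ M}

/-- State equation `M' = M + C·y` (the nonnegativity `M' ≥ 0` is implicit in
`M' : Fin m → ℕ`). -/
def stateEq (N : PetriNet m n) (M : Fin m → ℕ) (y : Fin n → ℕ) (M' : Fin m → ℕ) : Prop :=
  ∀ p, (M' p : ℤ) = (M p : ℤ) + ∑ t, N.C p t * (y t : ℤ)

/-- `σ` is an explanation of `t` at `M`: an implicit sequence after which `t`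
is enabled. -/
def IsExplanation (N : PetriNet m n) (TI : Set (Fin n)) (M : Fin m → ℕ)
    (t : Fin n) (σ : List (Fin n)) : Prop :=
  ImplicitSeq TI σ ∧ ∃ M', N.fires M σ M' ∧ N.enabled M' t

/-- `y` is a minimal explanation vector of `t` at `M`. -/
def MinExplVec (N : PetriNet m n) (TI : Set (Fin n)) (M : Fin m → ℕ)
    (t : Fin n) (y : Fin n → ℕ) : Prop :=
  (∃ σ, N.IsExplanation TI M t σ ∧ fvec σ = y) ∧
    ∀ σ', N.IsExplanation TI M t σ' → ¬ fvec σ' < y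

/-- `y` is the firing vector of some implicit sequence firable at `M`. -/
def FirableVec (N : PetriNet m n) (TI : Set (Fin n)) (M : Fin m → ℕ)
    (y : Fin n → ℕ) : Prop :=
  ∃ σ M', ImplicitSeq TI σ ∧ fvec σ = y ∧ N.fires M σ M'

/-- `y` is a maximal implicit firing vector at `M`. -/
def MaximalIFV (N : PetriNet m n) (TI : Set (Fin n)) (M : Fin m → ℕ)
    (y : Fin n → ℕ) : Prop :=
  N.FirableVec TI M y ∧ ∀ y', N.FirableVec TI M y' → ¬ y < y'

/-- `y` is the maximal implicit firing vector at `M`, dominating all others. -/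
def GreatestIFV (N : PetriNet m n) (TI : Set (Fin n)) (M : Fin m → ℕ)
    (y : Fin n → ℕ) : Prop :=
  N.FirableVec TI M y ∧ ∀ y', N.FirableVec TI M y' → y' ≤ y

/-- One step of the BRG: fire a minimal explanation followed by an explicit
transition `t ∉ TI`. -/
def BRGstep (N : PetriNet m n) (TI : Set (Fin n)) (M1 M2 : Fin m → ℕ) : Prop :=
  ∃ t ∉ TI, ∃ y, N.MinExplVec TI M1 t y ∧
    ∀ p, (M2 p : ℤ) = (M1 p : ℤ) + (∑ s, N.C p s * (y s : ℤ)) + N.C p t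

/-- `Mb` is a basis marking of the BRG with initial marking `M0`. -/
def Basis (N : PetriNet m n) (TI : Set (Fin n)) (M0 Mb : Fin m → ℕ) : Prop :=
  Relation.ReflTransGen (N.BRGstep TI) M0 Mb

/-- A marking is dead if it enables no transition. -/
def Dead (N : PetriNet m n) (M : Fin m → ℕ) : Prop := ∀ t, ¬ N.enabled M t

/-- Final markings of the GMEC `(w, k)`. -/
def Final (w : Fin m → ℤ) (k : ℤ) (M : Fin m → ℕ) : Prop :=
  ∑ p, w p * (M p : ℤ) ≤ k

/-- The plant is non-blocking. -/
def NonBlocking (N : PetriNet m n) (M0 : Fin m → ℕ) (w : Fin m → ℤ) (k : ℤ) : Prop :=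
  ∀ M ∈ N.Reach M0, ∃ M' ∈ N.Reach M, Final w k M'

/-- Boundedness of the marked net. -/
def Bounded (N : PetriNet m n) (M0 : Fin m → ℕ) : Prop :=
  ∃ K, ∀ M ∈ N.Reach M0, ∀ p, M p ≤ K

end PetriNet

open PetriNet

/-- A path in the BRG labelled by the list of explicit transitions fired:
each step fires a minimal explanation followed by an explicit transition. -/
inductive BRGpath (N : PetriNet m n) (TI : Set (Fin n)) :
    (Fin m → ℕ) → List (Fin n) → (Fin m → ℕ) → Prop
  | nil (M : Fin m → ℕ) : BRGpath N TI M [] M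
  | cons {M1 M2 M3 : Fin m → ℕ} {t : Fin n} {τ : List (Fin n)} :
      t ∉ TI →
      (∃ y, N.MinExplVec TI M1 t y ∧
        ∀ p, (M2 p : ℤ) = (M1 p : ℤ) + (∑ s, N.C p s * (y s : ℤ)) + N.C p t) →
      BRGpath N TI M2 τ M3 → BRGpath N TI M1 (t :: τ) M3

/-!
Rearrange the sequence one explicit transition at a time. If `α` is the implicit prefix before
the explicit transition `t`, then `α` explains `t` and so contains a minimal explanation `σ` up to
order: `α ~ σ ++ ρ`. After firing `σ t` instead of `α t`, the leftover implicit transitions `ρ`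
satisfy the state equation towards the marking the original sequence reached after `t`, and in a
net whose implicit subnet is acyclic the state equation is sufficient for firability, so some
reordering of `ρ` fires there. What remains is again an implicit prefix followed by the rest of
the original sequence.
-/

namespace PetriNet

variable {m n : ℕ} {N : PetriNet m n} {TI : Set (Fin n)}

theorem fires.append {M M' M'' : Fin m → ℕ} {σ τ : List (Fin n)} (h₁ : N.fires M σ M')
    (h₂ : N.fires M' τ M'') : N.fires M (σ ++ τ) M'' := by
  induction h₁ with
  | nil => exact h₂
  | cons he _ ih => exact .cons he (ih h₂)

theorem cast_fire_apply {M : Fin m → ℕ} {t : Fin n} (h : N.enabled M t) (p : Fin m) :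
    (N.fire M t p : ℤ) = M p + N.C p t := by
  simp only [fire, C]
  push_cast [Nat.cast_sub ((h p).trans (Nat.le_add_right _ _))]
  ring

theorem fires.cast_apply {M M' : Fin m → ℕ} {σ : List (Fin n)} (h : N.fires M σ M')
    (p : Fin m) : (M' p : ℤ) = M p + (σ.map (N.C p)).sum := by
  induction h with
  | nil => simp
  | cons he _ ih =>
    rw [ih, cast_fire_apply he, List.map_cons, List.sum_cons]
    ring

theorem sum_C_mul_fvec (σ : List (Fin n)) (p : Fin m) :
    ∑ s, N.C p s * (fvec σ s : ℤ) = (σ.map (N.C p)).sum := by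
  rw [Finset.sum_list_map_count, ← Finset.sum_subset (Finset.subset_univ σ.toFinset)
    fun s _ hs => by simp [fvec, List.count_eq_zero.2 (List.mem_toFinset.not.1 hs)]]
  simp [fvec, mul_comm]

theorem exists_perm_append_of_fvec_le {σ α : List (Fin n)} (h : fvec σ ≤ fvec α) :
    ∃ ρ, α.Perm (σ ++ ρ) := by
  obtain ⟨l, hl, hsub⟩ := List.subperm_iff_count.2 h
  obtain ⟨ρ, hρ⟩ := hsub.exists_perm_append
  exact ⟨ρ, hρ.trans (hl.append_right ρ)⟩

theorem mem_RI_self (M : Fin m → ℕ) : M ∈ N.RI TI M :=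
  ⟨[], List.forall_mem_nil _, .nil M⟩

theorem mem_RI_fire {Mb M : Fin m → ℕ} {t : Fin n} (hM : M ∈ N.RI TI Mb) (ht : t ∈ TI)
    (he : N.enabled M t) : N.fire M t ∈ N.RI TI Mb := by
  obtain ⟨σ, hσ, hf⟩ := hM
  refine ⟨σ ++ [t], fun s hs => ?_, hf.append (.cons he (.nil _))⟩
  rcases List.mem_append.1 hs with hs | hs
  · exact hσ s hs
  · rwa [List.mem_singleton.1 hs]

theorem SubnetAcyclic.exists_minimal (hacyc : N.SubnetAcyclic TI) {τ : List (Fin n)}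
    (hτ : τ ≠ []) :
    ∃ t ∈ τ, ∀ s ∈ τ, ¬ Relation.TransGen (N.arc TI) (.inr s) (.inr t) := by
  let r : Fin n → Fin n → Prop := fun s t => Relation.TransGen (N.arc TI) (.inr s) (.inr t)
  have : IsTrans (Fin n) r := ⟨fun _ _ _ => .trans⟩
  have : Std.Irrefl r := ⟨fun t => hacyc _⟩
  obtain ⟨t, ht, hmin⟩ :=
    (Finite.wellFounded_of_trans_of_irrefl r).has_min {t | t ∈ τ} (List.exists_mem_of_ne_nil τ hτ)
  exact ⟨t, ht, hmin⟩

theorem post_eq_zero_of_not_transGen {p : Fin m} {s t : Fin n} (hs : s ∈ TI) (ht : t ∈ TI)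
    (hst : ¬ Relation.TransGen (N.arc TI) (.inr s) (.inr t)) (hpre : 0 < N.Pre p t) :
    N.Post p s = 0 := by
  by_contra h
  have hsp : N.arc TI (.inr s) (.inl p) := ⟨hs, Nat.pos_of_ne_zero h⟩
  have hpt : N.arc TI (.inl p) (.inr t) := ⟨ht, hpre⟩
  exact hst (.tail (.single hsp) hpt)

/-- No transition of `τ` feeds an input place `p` of `t`, so along `τ` the place `p` only loses
tokens; as the final marking is nonnegative, `M p` must cover at least the tokens `t` takes. -/
theorem enabled_of_forall_not_transGen {τ : List (Fin n)} (hτ : ImplicitSeq TI τ) {t : Fin n}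
    (ht : t ∈ τ) (hmin : ∀ s ∈ τ, ¬ Relation.TransGen (N.arc TI) (.inr s) (.inr t))
    {M M' : Fin m → ℕ} (hM' : ∀ p, (M' p : ℤ) = M p + (τ.map (N.C p)).sum) :
    N.enabled M t := by
  intro p
  rcases Nat.eq_zero_or_pos (N.Pre p t) with hzero | hpos
  · simp [hzero]
  have hdrain : ∀ s ∈ τ, N.C p s = -N.Pre p s := fun s hs => by
    simp [C, post_eq_zero_of_not_transGen (hτ s hs) (hτ t ht) (hmin s hs) hpos]
  have hrest : ((τ.erase t).map (N.C p)).sum ≤ 0 := by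
    simpa using List.sum_le_sum (f := N.C p) (g := fun _ => 0) fun s hs => by
      simp [hdrain s (List.mem_of_mem_erase hs)]
  have hM'p := hM' p
  rw [((List.perm_cons_erase ht).map _).sum_eq, List.map_cons, List.sum_cons,
    hdrain t ht] at hM'p
  have : (0 : ℤ) ≤ M' p := Int.natCast_nonneg _
  omega

/-- Fire a transition of `τ` that no transition of `τ` precedes in the acyclic subnet, then
recurse. -/
theorem SubnetAcyclic.exists_perm_fires (hacyc : N.SubnetAcyclic TI) {τ : List (Fin n)}
    (hτ : ImplicitSeq TI τ) {M M' : Fin m → ℕ}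
    (hM' : ∀ p, (M' p : ℤ) = M p + (τ.map (N.C p)).sum) :
    ∃ σ, σ.Perm τ ∧ N.fires M σ M' := by
  induction hlen : τ.length generalizing τ M with
  | zero =>
    obtain rfl := List.eq_nil_of_length_eq_zero hlen
    obtain rfl : M' = M := funext fun p => by exact_mod_cast by simpa using hM' p
    exact ⟨[], .nil, .nil M'⟩
  | succ k ih =>
    obtain ⟨t, ht, hmin⟩ := hacyc.exists_minimal (List.ne_nil_of_length_eq_add_one hlen)
    have hperm := List.perm_cons_erase ht
    have he := enabled_of_forall_not_transGen hτ ht hmin hM'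
    obtain ⟨σ, hσ, hf⟩ := ih (τ := τ.erase t) (M := N.fire M t)
      (fun s hs => hτ s (List.mem_of_mem_erase hs))
      (fun p => by
        rw [cast_fire_apply he, hM' p, (hperm.map _).sum_eq, List.map_cons, List.sum_cons]
        ring)
      (by rw [List.length_erase_of_mem ht, hlen]; rfl)
    exact ⟨t :: σ, (hσ.cons t).trans hperm.symm, .cons he hf⟩

theorem exists_minExplVec_le {M : Fin m → ℕ} {t : Fin n} {α : List (Fin n)}
    (h : N.IsExplanation TI M t α) :
    ∃ σ, N.IsExplanation TI M t σ ∧ fvec σ ≤ fvec α ∧ N.MinExplVec TI M t (fvec σ) := by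
  obtain ⟨_, ⟨⟨σ, hσ, rfl⟩, hle⟩, hmin⟩ := wellFounded_lt.has_min
    {y | (∃ σ, N.IsExplanation TI M t σ ∧ fvec σ = y) ∧ y ≤ fvec α} ⟨_, ⟨α, h, rfl⟩, le_rfl⟩
  exact ⟨σ, hσ, hle, ⟨σ, hσ, rfl⟩, fun σ' h' hlt => hmin _ ⟨⟨σ', h', rfl⟩, hlt.le.trans hle⟩ hlt⟩

theorem exists_brgStep_of_explanation (hacyc : N.SubnetAcyclic TI) {Mb M : Fin m → ℕ}
    {t : Fin n} {α : List (Fin n)} (hα : ImplicitSeq TI α) (hf : N.fires Mb α M)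
    (he : N.enabled M t) :
    ∃ M₂, (∃ y, N.MinExplVec TI Mb t y ∧
        ∀ p, (M₂ p : ℤ) = Mb p + (∑ s, N.C p s * (y s : ℤ)) + N.C p t) ∧
      N.fire M t ∈ N.RI TI M₂ := by
  obtain ⟨σ, ⟨-, M₁, hfσ, heσ⟩, hle, hmin⟩ := exists_minExplVec_le ⟨hα, M, hf, he⟩
  obtain ⟨ρ, hperm⟩ := exists_perm_append_of_fvec_le hle
  have hρ : ImplicitSeq TI ρ := fun s hs => hα s (hperm.symm.subset (List.mem_append_right _ hs))
  obtain ⟨γ, hγ, hfγ⟩ := hacyc.exists_perm_fires hρ (M := N.fire M₁ t) (M' := N.fire M t)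
    fun p => by
      rw [cast_fire_apply he, cast_fire_apply heσ, hf.cast_apply, hfσ.cast_apply,
        (hperm.map _).sum_eq, List.map_append, List.sum_append]
      ring
  refine ⟨N.fire M₁ t, ⟨fvec σ, hmin, fun p => ?_⟩, γ, fun s hs => hρ s (hγ.subset hs), hfγ⟩
  rw [cast_fire_apply heσ, hfσ.cast_apply, sum_C_mul_fvec]

theorem exists_brgPath_of_mem_RI [DecidablePred (· ∈ TI)] (hacyc : N.SubnetAcyclic TI)
    {Mb M₀ M : Fin m → ℕ} {σ : List (Fin n)} (hM₀ : M₀ ∈ N.RI TI Mb) (hσ : N.fires M₀ σ M) :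
    ∃ Mb', BRGpath N TI Mb (σ.filter (fun t => decide (t ∉ TI))) Mb' ∧ M ∈ N.RI TI Mb' := by
  induction hσ generalizing Mb with
  | nil => exact ⟨Mb, .nil Mb, hM₀⟩
  | @cons M₀ _ t σ he _ ih =>
    by_cases ht : t ∈ TI
    · rw [List.filter_cons_of_neg (by simpa using ht)]
      exact ih (mem_RI_fire hM₀ ht he)
    · obtain ⟨α, hα, hf⟩ := hM₀
      obtain ⟨M₂, hstep, hM₂⟩ := exists_brgStep_of_explanation hacyc hα hf he
      obtain ⟨Mb', hpath, hM⟩ := ih hM₂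
      rw [List.filter_cons_of_pos (by simpa using ht)]
      exact ⟨Mb', .cons ht hstep hpath, hM⟩

end PetriNet

/-- any firing sequence `σ` from `M_b` reaching `M` can be
rearranged into a BRG path firing minimal explanations before the same
explicit transitions (in order), followed by a tail of implicit transitions;
hence `M` lies in the implicit reach of a basis marking reachable in the BRG
from `M_b`. -/
theorem rearrange_to_brg_path {m n : ℕ} (N : PetriNet m n) (TI : Set (Fin n))
    [DecidablePred (· ∈ TI)]
    (hacyc : N.SubnetAcyclic TI)
    (Mb M : Fin m → ℕ) (σ : List (Fin n)) (hσ : N.fires Mb σ M) :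
    ∃ Mb' : Fin m → ℕ,
      BRGpath N TI Mb (σ.filter (fun t => decide (t ∉ TI))) Mb' ∧
      M ∈ N.RI TI Mb' :=
  exists_brgPath_of_mem_RI hacyc (mem_RI_self Mb) hσ
end

section
/- Let N be a Petri net whose T_I-induced subnet is acyclic and conflict-free, and let M_b be a marking of N. If σ_1 and σ_2 are two sequences in T_I* firable at M_b with firing vectors y_1 ≠ y_2, and neither firing vector can be strictly extended (both maximal), then a contradiction arises: i.e., the set of firing vectors of implicit sequences firable at M_b has at most one maximal element. -/
open PetriNet

/-!
In a conflict-free subnet, firing an implicit transition never disables another one, and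
two transitions enabled at the same marking commute. Hence an implicit transition enabled at
the start of a firable implicit sequence can be moved to its front (or prepended, if it does
not occur). Consuming two firable sequences in parallel in this way produces a firable
sequence whose firing vector is their componentwise maximum: the firable vectors are closed
under `⊔`, so a maximal one dominates every other.
-/

namespace PetriNet

variable {m n : ℕ} {N : PetriNet m n} {TI : Set (Fin n)} {M : Fin m → ℕ} {t s : Fin n}

theorem fire_comm (ht : N.enabled M t) (hs : N.enabled M s) :
    N.fire (N.fire M t) s = N.fire (N.fire M s) t := by
  funext p
  have := ht p
  have := hs p
  simp only [fire]
  omega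

namespace ConflictFreeSubnet

theorem enabled_fire (hcf : N.ConflictFreeSubnet TI) (ht : t ∈ TI) (hs : s ∈ TI)
    (hne : t ≠ s) (het : N.enabled M t) : N.enabled (N.fire M s) t := by
  intro p
  rcases Nat.eq_zero_or_pos (N.Pre p t) with h0 | hpos
  · simp [h0]
  · have hs0 : N.Pre p s = 0 :=
      Nat.eq_zero_of_not_pos fun hps => hne (hcf p t ht s hs hpos hps)
    have := het p
    simp only [fire, hs0]
    omega

theorem exists_fires_cons_erase (hcf : N.ConflictFreeSubnet TI) {σ : List (Fin n)}
    {M' : Fin m → ℕ} (hσ : ImplicitSeq TI σ) (hf : N.fires M σ M') (ht : t ∈ TI)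
    (het : N.enabled M t) : ∃ M'', N.fires M (t :: σ.erase t) M'' := by
  induction hf with
  | nil M => exact ⟨_, fires.cons het (fires.nil _)⟩
  | @cons M M' s σ hes hrest ih =>
    obtain ⟨hsTI, hσ'⟩ := List.forall_mem_cons.mp hσ
    by_cases hst : s = t
    · subst hst
      exact ⟨M', by simpa using fires.cons hes hrest⟩
    · obtain ⟨M'', hf''⟩ := ih hσ' (hcf.enabled_fire ht hsTI (Ne.symm hst) het)
      cases hf'' with
      | cons _ hrest' =>
        rw [fire_comm hes het] at hrest'
        have hes' : N.enabled (N.fire M t) s := hcf.enabled_fire hsTI ht hst hes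
        rw [List.erase_cons_tail (by simpa using hst)]
        exact ⟨M'', fires.cons het (fires.cons hes' hrest')⟩

theorem firableVec_fvec_sup (hcf : N.ConflictFreeSubnet TI) {σ₁ σ₂ : List (Fin n)}
    {M₁ M₂ : Fin m → ℕ} (hσ₁ : ImplicitSeq TI σ₁) (hσ₂ : ImplicitSeq TI σ₂)
    (hf₁ : N.fires M σ₁ M₁) (hf₂ : N.fires M σ₂ M₂) :
    N.FirableVec TI M (fvec σ₁ ⊔ fvec σ₂) := by
  induction hf₁ generalizing σ₂ M₂ with
  | nil M => exact ⟨σ₂, M₂, hσ₂, funext fun u => by simp [fvec], hf₂⟩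
  | @cons M M₁ t σ₁ het hrest ih =>
    obtain ⟨htTI, hσ₁'⟩ := List.forall_mem_cons.mp hσ₁
    obtain ⟨_, hf₂'⟩ := hcf.exists_fires_cons_erase hσ₂ hf₂ htTI het
    cases hf₂' with
    | cons _ hrest₂ =>
      obtain ⟨σ, M', hσ, hv, hf⟩ :=
        ih hσ₁' (fun u hu => hσ₂ u (List.mem_of_mem_erase hu)) hrest₂
      refine ⟨t :: σ, M', List.forall_mem_cons.mpr ⟨htTI, hσ⟩, ?_, fires.cons het hf⟩
      funext u
      have hu := congrFun hv u
      simp only [fvec, Pi.sup_apply, List.count_cons, List.count_erase] at hu ⊢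
      split_ifs at hu ⊢ <;> omega

theorem firableVec_sup (hcf : N.ConflictFreeSubnet TI) {y₁ y₂ : Fin n → ℕ}
    (h₁ : N.FirableVec TI M y₁) (h₂ : N.FirableVec TI M y₂) :
    N.FirableVec TI M (y₁ ⊔ y₂) := by
  obtain ⟨σ₁, M₁, hσ₁, rfl, hf₁⟩ := h₁
  obtain ⟨σ₂, M₂, hσ₂, rfl, hf₂⟩ := h₂
  exact hcf.firableVec_fvec_sup hσ₁ hσ₂ hf₁ hf₂

end ConflictFreeSubnet

end PetriNet

theorem at_most_one_maximal_ifv_general {m n : ℕ} (N : PetriNet m n) (TI : Set (Fin n))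
    (hcf : N.ConflictFreeSubnet TI)
    (Mb : Fin m → ℕ) (y₁ y₂ : Fin n → ℕ)
    (h₁ : N.MaximalIFV TI Mb y₁) (h₂ : N.MaximalIFV TI Mb y₂) :
    y₁ = y₂ := by
  have hsup := hcf.firableVec_sup h₁.1 h₂.1
  have e₁ : y₁ = y₁ ⊔ y₂ := le_sup_left.eq_of_not_lt (h₁.2 _ hsup)
  have e₂ : y₂ = y₁ ⊔ y₂ := le_sup_right.eq_of_not_lt (h₂.2 _ hsup)
  exact e₁.trans e₂.symm

/-- in an acyclic conflict-free subnet, the set of implicit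
firing vectors firable at a marking has at most one maximal element. -/
theorem at_most_one_maximal_ifv {m n : ℕ} (N : PetriNet m n) (TI : Set (Fin n))
    (hacyc : N.SubnetAcyclic TI) (hcf : N.ConflictFreeSubnet TI)
    (Mb : Fin m → ℕ) (y₁ y₂ : Fin n → ℕ)
    (h₁ : N.MaximalIFV TI Mb y₁) (h₂ : N.MaximalIFV TI Mb y₂) :
    y₁ = y₂ :=
  at_most_one_maximal_ifv_general N TI hcf Mb y₁ y₂ h₁ h₂
end
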